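/- For 0 < μ < 1 let S_μ = {(N, k₁, k₂) ∈ ℝ³ : N ≥ 1, 1 ≤ k₂ ≤ k₁, N² k₁ k₂ ≤ μ^{−3}, N k₁⁵ ≤ μ^{−6} k₂} and let I(μ) = ∫_{S_μ} k₁ dN dk₁ dk₂. Then lim_{μ→0⁺} (log I(μ)) / (log(1/μ)) = 9/2. -/

import Mathlib

/-!
With `m = μ^{-1/2}` the constraints read `N²k₁k₂ ≤ m⁶` and `Nk₁⁵ ≤ m¹²k₂`. Multiplying the second by
the 13th power of the first gives `k₁ N^{3/2} k₂^{2/3} ≤ m⁵`, and with `k₁, k₂ ≤ m³` the integrand is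
dominated by the product `N^{-3/2} · m⁵ 1_{k₁ ≤ m³} · k₂^{-2/3} 1_{k₂ ≤ m³}`, whose integral is
`O(m⁹)`. Conversely the box `[1,2] × [m³/4, m³/3] × [m³/16, m³/8]` lies in the region and contributes
`(7/4608) m⁹`. So `I(μ) ≍ μ^{-9/2}`, and the logarithms differ by `O(1)`.
-/

open MeasureTheory Filter Real

/-- The region of `(N, k₁, k₂)` for type IIB vacua `AdS₅ × S⁵/(ℤ_{k₁}×ℤ_{k₂})`
allowed by the cutoff `μ`. -/
def ads5Region (μ : ℝ) : Set (ℝ × ℝ × ℝ) :=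
  {x | 1 ≤ x.1 ∧ 1 ≤ x.2.2 ∧ x.2.2 ≤ x.2.1 ∧
    x.1 ^ 2 * x.2.1 * x.2.2 ≤ μ ^ (-(3 : ℝ)) ∧
    x.1 * x.2.1 ^ 5 ≤ μ ^ (-(6 : ℝ)) * x.2.2}

/-- The weighted count `I(μ) = ∫_{S_μ} k₁ dN dk₁ dk₂`. -/
noncomputable def ads5Count (μ : ℝ) : ℝ :=
  ∫ x in ads5Region μ, x.2.1

open Topology Set

theorem tendsto_log_div_log_of_le_of_le {α : Type*} {l : Filter α} {f u : α → ℝ} {p c C : ℝ}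
    (hc : 0 < c) (hu : Tendsto u l atTop) (hlow : ∀ᶠ x in l, c * u x ^ p ≤ f x)
    (hupp : ∀ᶠ x in l, f x ≤ C * u x ^ p) :
    Tendsto (fun x => log (f x) / log (u x)) l (𝓝 p) := by
  have hlogu : Tendsto (fun x => log (u x)) l atTop := tendsto_log_atTop.comp hu
  have hlim (K : ℝ) : Tendsto (fun x => p + K / log (u x)) l (𝓝 p) := by
    simpa using tendsto_const_nhds.add (tendsto_const_nhds.div_atTop hlogu)
  have hu1 : ∀ᶠ x in l, 1 < u x := hu.eventually_gt_atTop 1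
  refine tendsto_of_tendsto_of_tendsto_of_le_of_le' (hlim (log c)) (hlim (log C)) ?_ ?_
  · filter_upwards [hu1, hlow] with x hx hfx
    have hup : 0 < u x ^ p := rpow_pos_of_pos (by linarith) p
    have hL : 0 < log (u x) := log_pos hx
    have := log_le_log (by positivity) hfx
    rw [log_mul hc.ne' hup.ne', log_rpow (by linarith)] at this
    rw [add_div' _ _ _ hL.ne', div_le_div_iff_of_pos_right hL]
    linarith
  · filter_upwards [hu1, hlow, hupp] with x hx hfx hfx'
    have hup : 0 < u x ^ p := rpow_pos_of_pos (by linarith) p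
    have hL : 0 < log (u x) := log_pos hx
    have hf : 0 < f x := lt_of_lt_of_le (by positivity) hfx
    have hC : 0 < C := pos_of_mul_pos_left (hf.trans_le hfx') hup.le
    have := log_le_log hf hfx'
    rw [log_mul hC.ne' hup.ne', log_rpow (by linarith)] at this
    rw [add_div' _ _ _ hL.ne', div_le_div_iff_of_pos_right hL]
    linarith

/-- `ads5Region μ` in terms of `m = μ^{-1/2}`, see `ads5Region_eq_scaledRegion`. -/
def scaledRegion (m : ℝ) : Set (ℝ × ℝ × ℝ) :=
  {x | 1 ≤ x.1 ∧ 1 ≤ x.2.2 ∧ x.2.2 ≤ x.2.1 ∧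
    x.1 ^ 2 * x.2.1 * x.2.2 ≤ m ^ 6 ∧ x.1 * x.2.1 ^ 5 ≤ m ^ 12 * x.2.2}

theorem measurableSet_scaledRegion (m : ℝ) : MeasurableSet (scaledRegion m) := by
  simp only [scaledRegion, ofPred_and]
  repeat' apply MeasurableSet.inter
  all_goals exact measurableSet_le (by fun_prop) (by fun_prop)

theorem rpow_div_two_eq_sqrt_pow {t : ℝ} (ht : 0 ≤ t) (n : ℕ) : t ^ ((n : ℝ) / 2) = √t ^ n := by
  rw [sqrt_eq_rpow, ← rpow_mul_natCast ht]
  ring_nf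

theorem setIntegral_Icc_prod_Icc_prod_Icc_snd_fst {a b c d e f : ℝ} (hab : a ≤ b) (hcd : c ≤ d)
    (hef : e ≤ f) :
    ∫ x in Icc a b ×ˢ (Icc c d ×ˢ Icc e f), x.2.1 = (b - a) * ((d ^ 2 - c ^ 2) / 2 * (f - e)) := by
  have hconst {p q : ℝ} (hpq : p ≤ q) : ∫ _ in Icc p q, (1 : ℝ) = q - p := by
    rw [setIntegral_const, volume_real_Icc_of_le hpq, smul_eq_mul, mul_one]
  have hid : ∫ t in Icc c d, t = (d ^ 2 - c ^ 2) / 2 := by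
    rw [integral_Icc_eq_integral_Ioc, ← intervalIntegral.integral_of_le hcd, integral_id]
  calc ∫ x in Icc a b ×ˢ (Icc c d ×ˢ Icc e f), x.2.1
      = ∫ x in Icc a b ×ˢ (Icc c d ×ˢ Icc e f), (1 : ℝ) * (x.2.1 * 1) := by simp
    _ = (b - a) * ((d ^ 2 - c ^ 2) / 2 * (f - e)) := by
        rw [Measure.volume_eq_prod, setIntegral_prod_mul (fun _ ↦ 1) fun y : ℝ × ℝ ↦ y.1 * 1,
          Measure.volume_eq_prod, setIntegral_prod_mul (fun t ↦ t) fun _ ↦ 1, hconst hab,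
          hconst hef, hid]

theorem ads5Region_eq_scaledRegion {μ : ℝ} (hμ : 0 < μ) : ads5Region μ = scaledRegion √μ⁻¹ := by
  have hpow (n : ℕ) : μ ^ (-((n : ℝ) / 2)) = √μ⁻¹ ^ n := by
    rw [rpow_neg hμ.le, ← inv_rpow hμ.le, rpow_div_two_eq_sqrt_pow (inv_nonneg.2 hμ.le)]
  have h₆ : μ ^ (-(3 : ℝ)) = √μ⁻¹ ^ 6 := by rw [← hpow]; norm_num
  have h₁₂ : μ ^ (-(6 : ℝ)) = √μ⁻¹ ^ 12 := by rw [← hpow]; norm_num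
  simp only [ads5Region, scaledRegion, h₆, h₁₂]

section scaledRegion

variable {m : ℝ} {x : ℝ × ℝ × ℝ}

theorem snd_snd_le_of_mem_scaledRegion (hm : 0 ≤ m) (hx : x ∈ scaledRegion m) :
    x.2.2 ≤ m ^ 3 := by
  obtain ⟨hN, hb, hba, hcube, -⟩ := hx
  refine le_of_pow_le_pow_left₀ two_ne_zero (by positivity) ?_
  calc x.2.2 ^ 2 = 1 * x.2.2 * x.2.2 := by ring
    _ ≤ x.1 ^ 2 * x.2.1 * x.2.2 := by
        have := one_le_pow₀ (n := 2) hN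
        gcongr
    _ ≤ (m ^ 3) ^ 2 := by rw [← pow_mul]; exact hcube

theorem snd_fst_le_of_mem_scaledRegion (hm : 0 ≤ m) (hx : x ∈ scaledRegion m) :
    x.2.1 ≤ m ^ 3 := by
  obtain ⟨hN, hb, hba, -, hquint⟩ := hx
  have ha : 0 < x.2.1 := by linarith
  refine le_of_pow_le_pow_left₀ four_ne_zero (by positivity) (le_of_mul_le_mul_right ?_ ha)
  calc x.2.1 ^ 4 * x.2.1 ≤ x.1 * x.2.1 ^ 5 := by nlinarith [pow_pos ha 5]
    _ ≤ m ^ 12 * x.2.2 := hquint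
    _ ≤ (m ^ 3) ^ 4 * x.2.1 := by rw [← pow_mul]; gcongr

/-- `(k₁ N^{3/2} k₂^{2/3})^18 k₂ = (N k₁⁵) (N² k₁ k₂)^13`. -/
theorem mul_rpow_mul_rpow_le_of_mem_scaledRegion (hm : 0 ≤ m) (hx : x ∈ scaledRegion m) :
    x.2.1 * x.1 ^ (3 / 2 : ℝ) * x.2.2 ^ (2 / 3 : ℝ) ≤ m ^ 5 := by
  obtain ⟨hN, hb, hba, hcube, hquint⟩ := hx
  have hN0 : 0 ≤ x.1 := by linarith
  have hb0 : 0 < x.2.2 := by linarith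
  have hpow (t q : ℝ) (ht : 0 ≤ t) (k : ℕ) (hk : q * 18 = k) : (t ^ q) ^ 18 = t ^ k := by
    rw [← rpow_natCast, ← rpow_mul ht, ← rpow_natCast]; exact_mod_cast congrArg (t ^ ·) hk
  have hcube0 : 0 ≤ x.1 ^ 2 * x.2.1 * x.2.2 := by
    have : 0 ≤ x.2.1 := by linarith
    positivity
  refine le_of_pow_le_pow_left₀ (n := 18) (by norm_num) (by positivity)
    (le_of_mul_le_mul_right ?_ hb0)
  calc (x.2.1 * x.1 ^ (3 / 2 : ℝ) * x.2.2 ^ (2 / 3 : ℝ)) ^ 18 * x.2.2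
      = (x.1 * x.2.1 ^ 5) * (x.1 ^ 2 * x.2.1 * x.2.2) ^ 13 := by
        rw [mul_pow, mul_pow, hpow _ _ hN0 27 (by norm_num), hpow _ _ hb0.le 12 (by norm_num)]
        ring
    _ ≤ (m ^ 12 * x.2.2) * (m ^ 6) ^ 13 := by gcongr
    _ = (m ^ 5) ^ 18 * x.2.2 := by ring

noncomputable def scaledMajorant (m : ℝ) (x : ℝ × ℝ × ℝ) : ℝ :=
  (Ici 1).indicator (fun N => N ^ (-(3 / 2) : ℝ)) x.1 *
    ((Icc 1 (m ^ 3)).indicator (fun _ => m ^ 5) x.2.1 *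
      (Icc 1 (m ^ 3)).indicator (fun b => b ^ (-(2 / 3) : ℝ)) x.2.2)

theorem scaledMajorant_nonneg (hm : 0 ≤ m) (x : ℝ × ℝ × ℝ) : 0 ≤ scaledMajorant m x := by
  refine mul_nonneg ?_ (mul_nonneg ?_ ?_) <;> refine indicator_nonneg (fun t ht => ?_) _
  · exact rpow_nonneg (le_trans zero_le_one ht) _
  · positivity
  · exact rpow_nonneg (le_trans zero_le_one ht.1) _

theorem indicator_le_scaledMajorant (hm : 0 ≤ m) (x : ℝ × ℝ × ℝ) :
    (scaledRegion m).indicator (fun x => x.2.1) x ≤ scaledMajorant m x := by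
  by_cases hx : x ∈ scaledRegion m
  · obtain ⟨hN, hb, hba, -⟩ := id hx
    have hN0 : 0 < x.1 := by linarith
    have hb0 : 0 < x.2.2 := by linarith
    rw [indicator_of_mem hx, scaledMajorant, indicator_of_mem (mem_Ici.2 hN),
      indicator_of_mem (mem_Icc.2 ⟨hb.trans hba, snd_fst_le_of_mem_scaledRegion hm hx⟩),
      indicator_of_mem (mem_Icc.2 ⟨hb, snd_snd_le_of_mem_scaledRegion hm hx⟩), rpow_neg hN0.le,
      rpow_neg hb0.le, ← div_eq_inv_mul, ← div_eq_mul_inv, div_div, le_div_iff₀ (by positivity),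
      ← mul_assoc, mul_right_comm]
    exact mul_rpow_mul_rpow_le_of_mem_scaledRegion hm hx
  · rw [indicator_of_notMem hx]
    exact scaledMajorant_nonneg hm x

theorem integrable_scaledMajorant (m : ℝ) : Integrable (scaledMajorant m) := by
  have h₁ : Integrable ((Ici 1).indicator (fun N : ℝ => N ^ (-(3 / 2) : ℝ))) := by
    rw [integrable_indicator_iff measurableSet_Ici, integrableOn_Ici_iff_integrableOn_Ioi]
    exact integrableOn_Ioi_rpow_of_lt (by norm_num) one_pos
  have h₂ : Integrable ((Icc 1 (m ^ 3)).indicator (fun _ : ℝ => m ^ 5)) :=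
    (integrable_indicator_iff measurableSet_Icc).2 (integrableOn_const measure_Icc_lt_top.ne)
  have h₃ : Integrable ((Icc 1 (m ^ 3)).indicator (fun b : ℝ => b ^ (-(2 / 3) : ℝ))) := by
    refine (integrable_indicator_iff measurableSet_Icc).2 (ContinuousOn.integrableOn_Icc ?_)
    exact fun t ht => (continuousAt_rpow_const t _ (Or.inl (by linarith [ht.1]))).continuousWithinAt
  exact h₁.mul_prod (h₂.mul_prod h₃)

theorem integral_scaledMajorant (hm : 1 ≤ m) :
    ∫ x, scaledMajorant m x = 2 * (m ^ 5 * (m ^ 3 - 1) * (3 * m - 3)) := by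
  have hm3 : 1 ≤ m ^ 3 := one_le_pow₀ hm
  set f₁ := (Ici 1).indicator (fun N : ℝ => N ^ (-(3 / 2) : ℝ))
  set f₂ := (Icc 1 (m ^ 3)).indicator (fun _ : ℝ => m ^ 5)
  set f₃ := (Icc 1 (m ^ 3)).indicator (fun b : ℝ => b ^ (-(2 / 3) : ℝ))
  have h₁ : ∫ N, f₁ N = 2 := by
    rw [integral_indicator measurableSet_Ici, integral_Ici_eq_integral_Ioi,
      integral_Ioi_rpow_of_lt (by norm_num) one_pos]
    norm_num
  have h₂ : ∫ a, f₂ a = m ^ 5 * (m ^ 3 - 1) := by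
    rw [integral_indicator measurableSet_Icc, setIntegral_const, volume_real_Icc_of_le hm3,
      smul_eq_mul, mul_comm]
  have h₃ : ∫ b, f₃ b = 3 * m - 3 := by
    rw [integral_indicator measurableSet_Icc, integral_Icc_eq_integral_Ioc,
      ← intervalIntegral.integral_of_le hm3, integral_rpow (Or.inl (by norm_num)), one_rpow,
      ← rpow_natCast, ← rpow_mul (by linarith)]
    norm_num
    ring
  calc ∫ x, scaledMajorant m x = (∫ N, f₁ N) * ∫ y : ℝ × ℝ, f₂ y.1 * f₃ y.2 :=
        integral_prod_mul (μ := volume) (ν := volume) f₁ fun y : ℝ × ℝ => f₂ y.1 * f₃ y.2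
    _ = 2 * (m ^ 5 * (m ^ 3 - 1) * (3 * m - 3)) := by
        rw [Measure.volume_eq_prod, integral_prod_mul, h₁, h₂, h₃]

theorem integrableOn_scaledRegion (hm : 0 ≤ m) :
    IntegrableOn (fun x : ℝ × ℝ × ℝ => x.2.1) (scaledRegion m) := by
  rw [← integrable_indicator_iff (measurableSet_scaledRegion m)]
  refine (integrable_scaledMajorant m).mono' ?_ (ae_of_all _ fun x => ?_)
  · exact (measurable_snd.fst.indicator (measurableSet_scaledRegion m)).aestronglyMeasurable
  · rw [Real.norm_eq_abs, abs_of_nonneg]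
    · exact indicator_le_scaledMajorant hm x
    · exact indicator_nonneg (fun y hy => by linarith [hy.2.1, hy.2.2.1]) x

theorem setIntegral_scaledRegion_le (hm : 1 ≤ m) :
    ∫ x in scaledRegion m, x.2.1 ≤ 6 * m ^ 9 := by
  rw [← integral_indicator (measurableSet_scaledRegion m)]
  calc ∫ x, (scaledRegion m).indicator (fun x => x.2.1) x ≤ ∫ x, scaledMajorant m x :=
        integral_mono ((integrableOn_scaledRegion (by linarith)).integrable_indicator
          (measurableSet_scaledRegion m)) (integrable_scaledMajorant m)
          (indicator_le_scaledMajorant (by linarith))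
    _ = 2 * (m ^ 5 * (m ^ 3 - 1) * (3 * m - 3)) := integral_scaledMajorant hm
    _ ≤ 6 * m ^ 9 := by
        have : 0 ≤ m ^ 5 * (m ^ 3 + m - 1) :=
          mul_nonneg (by positivity) (by linarith [one_le_pow₀ (n := 3) hm])
        nlinarith

theorem box_subset_scaledRegion (hm : 3 ≤ m) :
    Icc 1 2 ×ˢ (Icc (m ^ 3 / 4) (m ^ 3 / 3) ×ˢ Icc (m ^ 3 / 16) (m ^ 3 / 8)) ⊆ scaledRegion m := by
  rintro ⟨N, a, b⟩ ⟨⟨hN1, hN2⟩, ⟨ha1, ha2⟩, ⟨hb1, hb2⟩⟩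
  have hm3 : 27 ≤ m ^ 3 := by nlinarith [pow_le_pow_left₀ (by norm_num) hm 3]
  have hb0 : 0 ≤ b := by linarith
  have ha0 : 0 ≤ a := by linarith
  refine ⟨hN1, by linarith, by linarith, ?_, ?_⟩
  · calc N ^ 2 * a * b ≤ 2 ^ 2 * (m ^ 3 / 3) * (m ^ 3 / 8) := by gcongr
      _ ≤ m ^ 6 := by nlinarith
  · calc N * a ^ 5 ≤ 2 * (m ^ 3 / 3) ^ 5 := by gcongr
      _ ≤ m ^ 12 * (m ^ 3 / 16) := by nlinarith [pow_nonneg (by linarith : (0:ℝ) ≤ m) 15]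
      _ ≤ m ^ 12 * b := by gcongr

theorem le_setIntegral_scaledRegion (hm : 3 ≤ m) :
    7 / 4608 * m ^ 9 ≤ ∫ x in scaledRegion m, x.2.1 := by
  have hm3 : 0 ≤ m ^ 3 := by positivity
  calc 7 / 4608 * m ^ 9
      = (2 - 1) * (((m ^ 3 / 3) ^ 2 - (m ^ 3 / 4) ^ 2) / 2 * (m ^ 3 / 8 - m ^ 3 / 16)) := by ring
    _ = ∫ x in Icc 1 2 ×ˢ (Icc (m ^ 3 / 4) (m ^ 3 / 3) ×ˢ Icc (m ^ 3 / 16) (m ^ 3 / 8)), x.2.1 :=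
        (setIntegral_Icc_prod_Icc_prod_Icc_snd_fst (by norm_num) (by linarith) (by linarith)).symm
    _ ≤ ∫ x in scaledRegion m, x.2.1 :=
        setIntegral_mono_set (integrableOn_scaledRegion (by linarith))
          ((ae_restrict_iff' (measurableSet_scaledRegion m)).2
            (ae_of_all _ fun x hx => show (0 : ℝ) ≤ x.2.1 by linarith [hx.2.1, hx.2.2.1]))
          (box_subset_scaledRegion hm).eventuallyLE

end scaledRegion

/-- The count `𝔑^{(Q=4)}_{AdS₅}(μ)` grows like `μ^{−9/2}` up to subpolynomial
factors: `lim_{μ→0⁺} (log I(μ))/(log(1/μ)) = 9/2`. -/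
theorem ads5_count_growth :
    Tendsto (fun μ : ℝ => Real.log (ads5Count μ) / Real.log (1 / μ))
      (nhdsWithin 0 (Set.Ioi 0)) (nhds (9 / 2)) := by
  have hpow_nine_halves {μ : ℝ} (hμ : 0 < μ) : (1 / μ) ^ (9 / 2 : ℝ) = √μ⁻¹ ^ 9 := by
    rw [one_div, ← rpow_div_two_eq_sqrt_pow (inv_nonneg.2 hμ.le)]
    norm_num
  refine tendsto_log_div_log_of_le_of_le (u := fun μ => 1 / μ) (c := 7 / 4608) (C := 6)
    (by norm_num) (by simpa only [one_div] using tendsto_inv_nhdsGT_zero) ?_ ?_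
  · filter_upwards [Ioc_mem_nhdsGT (by norm_num : (0 : ℝ) < 1 / 9)] with μ ⟨hμ, hμ9⟩
    have hm : 3 ≤ √μ⁻¹ :=
      (le_sqrt' (by norm_num)).2 ((le_inv_comm₀ (by norm_num) hμ).2 (by norm_num [← one_div, hμ9]))
    rw [hpow_nine_halves hμ, ads5Count, ads5Region_eq_scaledRegion hμ]
    exact le_setIntegral_scaledRegion hm
  · filter_upwards [Ioc_mem_nhdsGT one_pos] with μ ⟨hμ, hμ1⟩
    have hm : 1 ≤ √μ⁻¹ := one_le_sqrt.2 (one_le_inv₀ hμ |>.2 hμ1)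
    rw [hpow_nine_halves hμ, ads5Count, ads5Region_eq_scaledRegion hμ]
    exact setIntegral_scaledRegion_le hm
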